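/- arXiv:2604.01198 — 5 statements merged into one kernel-verified Lean document; each statement's English description precedes it below -/
import Mathlib

section
/- Let N, m, p be natural numbers and let f_e : ℝ^N × ℝ^m → ℝ^N, g_e : ℝ^N → ℝ^p, h_e : ℝ^N × ℝ^m → ℝ be polynomial maps (every coordinate is the evaluation of a real multivariate polynomial) with f_e(0,0) = 0 and g_e(0) = 0. Let x_e : [0,∞) → ℝ^N be differentiable with continuous derivative and w : [0,∞) → ℝ^m be continuous, satisfying x_e'(t) = f_e(x_e(t), w(t)) for all t ≥ 0; set z(t) = h_e(x_e(t), w(t)) and v(t) = g_e(x_e(t)). Assume: (i) ∫₀^T z(t) dt ≥ 0 for every T ≥ 0; (ii) there exists γ ≥ 0 such that whenever sup_{t≥0} ‖v(t)‖ is finite, one has ‖w(t)‖ ≤ γ · sup_{s≥0} ‖v(s)‖ for all t ≥ 0; (iii) there exist a continuously differentiable V : ℝ^N → ℝ with V(0) = 0 and V(y) > 0 for all y ≠ 0, a constant c > 0 such that the sublevel set {y ∈ ℝ^N : V(y) ≤ c} is compact, a scalar s ≥ 0 and ε > 0 such that ⟨∇V(y), f_e(y,u)⟩ + s·h_e(y,u)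 ≤ −ε·‖y‖² for every u ∈ ℝ^m and every y ∈ ℝ^N with V(y) ≤ c. Then V(x_e(0)) ≤ c implies that x_e(t) → 0 as t → ∞. -/
open RealInnerProductSpace

/-!
Along the trajectory, `W(t) = V(xₑ(t)) + s ∫₀ᵗ z` satisfies `Ẇ ≤ -ε ‖xₑ‖²` as long as `xₑ` stays
in `{V ≤ c}`, and the integral constraint gives `V(xₑ) ≤ W`. Hence the trajectory never leaves
the sublevel set and `ε ∫₀^∞ ‖xₑ‖² ≤ V(xₑ(0)) ≤ c`. On the compact sublevel set `gₑ` is bounded,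
so the gain condition bounds `w`, hence `ẋₑ = fₑ(xₑ, w)` is bounded and `xₑ` is Lipschitz.
A uniformly continuous, square-integrable trajectory tends to `0` (Barbalat).
-/

open Filter Topology Set MeasureTheory intervalIntegral

section PolynomialMaps

variable {ι κ ν : Type*}

theorem continuous_eval_euclideanSpace (P : MvPolynomial ι ℝ) :
    Continuous fun y : EuclideanSpace ℝ ι => MvPolynomial.eval (fun j => y j) P :=
  (MvPolynomial.continuous_eval P).comp (continuous_pi (PiLp.continuous_apply 2 _))

theorem continuous_eval_sumElim_euclideanSpace (P : MvPolynomial (ι ⊕ κ) ℝ) :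
    Continuous fun q : EuclideanSpace ℝ ι × EuclideanSpace ℝ κ =>
      MvPolynomial.eval (Sum.elim (fun j => q.1 j) (fun j => q.2 j)) P :=
  (MvPolynomial.continuous_eval P).comp <| continuous_pi fun
    | .inl j => (PiLp.continuous_apply 2 _ j).comp continuous_fst
    | .inr j => (PiLp.continuous_apply 2 _ j).comp continuous_snd

theorem continuous_of_apply_eq_eval {F : EuclideanSpace ℝ ι → EuclideanSpace ℝ κ}
    (hF : ∃ P : κ → MvPolynomial ι ℝ, ∀ y i, F y i = MvPolynomial.eval (fun j => y j) (P i)) :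
    Continuous F := by
  obtain ⟨P, hP⟩ := hF
  refine (PiLp.continuous_toLp 2 _).comp (continuous_pi fun i => ?_)
  simpa only [hP] using continuous_eval_euclideanSpace (P i)

theorem continuous_uncurry_of_apply_eq_eval
    {F : EuclideanSpace ℝ ι → EuclideanSpace ℝ κ → EuclideanSpace ℝ ν}
    (hF : ∃ P : ν → MvPolynomial (ι ⊕ κ) ℝ,
      ∀ y u i, F y u i = MvPolynomial.eval (Sum.elim (fun j => y j) (fun j => u j)) (P i)) :
    Continuous (Function.uncurry F) := by
  obtain ⟨P, hP⟩ := hF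
  refine (PiLp.continuous_toLp 2 _).comp (continuous_pi fun i => ?_)
  simpa only [Function.uncurry, hP] using continuous_eval_sumElim_euclideanSpace (P i)

theorem continuous_uncurry_of_eq_eval {F : EuclideanSpace ℝ ι → EuclideanSpace ℝ κ → ℝ}
    (hF : ∃ P : MvPolynomial (ι ⊕ κ) ℝ,
      ∀ y u, F y u = MvPolynomial.eval (Sum.elim (fun j => y j) (fun j => u j)) P) :
    Continuous (Function.uncurry F) := by
  obtain ⟨P, hP⟩ := hF
  exact (continuous_eval_sumElim_euclideanSpace P).congr fun q => (hP q.1 q.2).symm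

end PolynomialMaps

section RealAnalysis

variable {E : Type*} [NormedAddCommGroup E]

theorem ContinuousOn.intervalIntegrable_of_Ici {φ : ℝ → E} {a b c : ℝ}
    (hφ : ContinuousOn φ (Ici a)) (hb : a ≤ b) (hc : a ≤ c) :
    IntervalIntegrable φ volume b c :=
  (hφ.mono fun _ ht => (le_min hb hc).trans ht.1).intervalIntegrable

theorem hasDerivWithinAt_integral_Ici [NormedSpace ℝ E] [CompleteSpace E] {φ : ℝ → E}
    {a t : ℝ} (hφ : ContinuousOn φ (Ici a)) (ht : a ≤ t) :
    HasDerivWithinAt (fun T => ∫ τ in a..T, φ τ) (φ t) (Ici a) t := by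
  obtain rfl | ht := ht.eq_or_lt
  · exact integral_hasDerivWithinAt_right (t := Ioi a) (hφ.intervalIntegrable_of_Ici le_rfl le_rfl)
      ((hφ.mono Ioi_subset_Ici_self).stronglyMeasurableAtFilter_nhdsWithin measurableSet_Ioi a)
      ((hφ a self_mem_Ici).mono Ioi_subset_Ici_self)
  · exact (integral_hasDerivAt_right (hφ.intervalIntegrable_of_Ici le_rfl ht.le)
      ((hφ.mono Ioi_subset_Ici_self).stronglyMeasurableAtFilter isOpen_Ioi t ht)
      ((hφ t ht.le).continuousAt (Ici_mem_nhds ht))).hasDerivWithinAt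

theorem HasDerivWithinAt.eventually_lt_right_of_neg {f : ℝ → ℝ} {f' a : ℝ}
    (hf : HasDerivWithinAt f f' (Ici a) a) (hf' : f' < 0) : ∀ᶠ t in 𝓝[>] a, f t < f a := by
  filter_upwards [hf.Ioi_of_Ici.limsup_slope_le' (lt_irrefl a) hf', self_mem_nhdsWithin]
    with t hslope hat
  exact (slope_neg_iff_of_le (le_of_lt hat)).mp hslope

theorem exists_le_integral_sq_norm_of_uniformContinuousOn {u : ℝ → E}
    (hu : UniformContinuousOn u (Ici 0)) {r : ℝ} (hr : 0 < r) :
    ∃ δ > 0, ∃ η > 0, ∀ t, 0 ≤ t → r ≤ ‖u t‖ → η ≤ ∫ τ in t..t + δ, ‖u τ‖ ^ 2 := by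
  obtain ⟨δ, hδ, hclose⟩ := Metric.uniformContinuousOn_iff.1 hu (r / 2) (half_pos hr)
  refine ⟨δ / 2, half_pos hδ, (r / 2) ^ 2 * (δ / 2), by positivity, fun t ht hrt => ?_⟩
  have hlow : ∀ σ ∈ Icc t (t + δ / 2), (r / 2) ^ 2 ≤ ‖u σ‖ ^ 2 := by
    intro σ hσ
    have hdist : dist (u σ) (u t) < r / 2 := hclose σ (ht.trans hσ.1) t ht <| by
      rw [Real.dist_eq, abs_of_nonneg (by linarith [hσ.1])]
      linarith [hσ.2]
    have := norm_sub_norm_le (u t) (u σ)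
    rw [dist_eq_norm, norm_sub_rev] at hdist
    gcongr
    linarith
  have hint : IntervalIntegrable (fun τ => ‖u τ‖ ^ 2) volume t (t + δ / 2) :=
    (hu.continuousOn.norm.pow 2).intervalIntegrable_of_Ici ht (by linarith)
  calc (r / 2) ^ 2 * (δ / 2) = ∫ _ in t..t + δ / 2, (r / 2) ^ 2 := by simp; ring
    _ ≤ ∫ τ in t..t + δ / 2, ‖u τ‖ ^ 2 :=
      integral_mono_on (by linarith) intervalIntegrable_const hint hlow

/-- Barbalat's lemma. -/
theorem tendsto_zero_of_uniformContinuousOn_of_integral_sq_norm_le {u : ℝ → E} {C : ℝ}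
    (hu : UniformContinuousOn u (Ici 0))
    (hC : ∀ T, 0 ≤ T → ∫ t in (0 : ℝ)..T, ‖u t‖ ^ 2 ≤ C) :
    Tendsto u atTop (𝓝 0) := by
  have hint : ContinuousOn (fun t => ‖u t‖ ^ 2) (Ici 0) := hu.continuousOn.norm.pow 2
  set I : ℝ → ℝ := fun T => ∫ t in (0 : ℝ)..max T 0, ‖u t‖ ^ 2
  have hmono : Monotone I := fun a b hab =>
    integral_mono_interval le_rfl (le_max_right a 0) (max_le_max_right 0 hab)
      (Eventually.of_forall fun t => by positivity)
      (hint.intervalIntegrable_of_Ici le_rfl (le_max_right b 0))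
  have hlim := tendsto_atTop_ciSup hmono ⟨C, by rintro _ ⟨T, rfl⟩; exact hC _ (le_max_right T 0)⟩
  rw [Metric.tendsto_nhds]
  intro r hr
  obtain ⟨δ, hδ, η, hη, hgain⟩ := exists_le_integral_sq_norm_of_uniformContinuousOn hu hr
  have hincr : Tendsto (fun t => I (t + δ) - I t) atTop (𝓝 0) := by
    simpa using (hlim.comp (tendsto_atTop_add_const_right _ δ tendsto_id)).sub hlim
  filter_upwards [hincr.eventually (gt_mem_nhds hη), eventually_ge_atTop 0] with t hsmall ht
  rw [dist_zero_right]
  by_contra! hrt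
  have hstep : I (t + δ) - I t = ∫ τ in t..t + δ, ‖u τ‖ ^ 2 := by
    simp only [I, max_eq_left ht, max_eq_left (by linarith : 0 ≤ t + δ)]
    exact integral_interval_sub_left (hint.intervalIntegrable_of_Ici le_rfl (by linarith))
      (hint.intervalIntegrable_of_Ici le_rfl ht)
  linarith [hgain t ht hrt]

end RealAnalysis

section Dissipation

variable {v v' z q : ℝ → ℝ} {s ε c k : ℝ}

/-- In the application `v = V ∘ xₑ`, `z = hₑ(xₑ, w)` and `q = ‖xₑ‖²`. -/
noncomputable def augmentedLyapunov (v z q : ℝ → ℝ) (s k t : ℝ) : ℝ :=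
  v t + s * (∫ τ in (0 : ℝ)..t, z τ) + k * ∫ τ in (0 : ℝ)..t, q τ

theorem augmentedLyapunov_zero : augmentedLyapunov v z q s k 0 = v 0 := by
  simp [augmentedLyapunov]

theorem le_augmentedLyapunov (hs : 0 ≤ s) (hk : 0 ≤ k) (hq0 : ∀ t, 0 ≤ q t)
    (hz : ∀ T, 0 ≤ T → 0 ≤ ∫ t in (0 : ℝ)..T, z t) {t : ℝ} (ht : 0 ≤ t) :
    v t ≤ augmentedLyapunov v z q s k t := by
  have := mul_nonneg hs (hz t ht)
  have := mul_nonneg hk (integral_nonneg (μ := volume) ht fun τ _ => hq0 τ)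
  unfold augmentedLyapunov
  linarith

theorem hasDerivWithinAt_augmentedLyapunov (hv : ∀ t, 0 ≤ t → HasDerivAt v (v' t) t)
    (hz : ContinuousOn z (Ici 0)) (hq : ContinuousOn q (Ici 0)) {t : ℝ} (ht : 0 ≤ t) :
    HasDerivWithinAt (augmentedLyapunov v z q s k) (v' t + s * z t + k * q t) (Ici 0) t :=
  (((hv t ht).hasDerivWithinAt.add ((hasDerivWithinAt_integral_Ici hz ht).const_mul s)).add
    ((hasDerivWithinAt_integral_Ici hq ht).const_mul k))

theorem antitoneOn_augmentedLyapunov (hv : ∀ t, 0 ≤ t → HasDerivAt v (v' t) t)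
    (hz : ContinuousOn z (Ici 0)) (hq : ContinuousOn q (Ici 0)) (hq0 : ∀ t, 0 ≤ q t)
    (hdiss : ∀ t, 0 ≤ t → v t ≤ c → v' t + s * z t ≤ -ε * q t) (hk : k ≤ ε)
    {D : Set ℝ} (hD : Convex ℝ D) (hD0 : D ⊆ Ici 0) (hvD : ∀ t ∈ D, v t ≤ c) :
    AntitoneOn (augmentedLyapunov v z q s k) D := by
  have hderiv := fun t (ht : 0 ≤ t) =>
    hasDerivWithinAt_augmentedLyapunov (s := s) (k := k) hv hz hq ht
  have hint : interior D ⊆ Ioi 0 := (interior_mono hD0).trans (by rw [interior_Ici])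
  refine antitoneOn_of_hasDerivWithinAt_nonpos hD
    (fun t ht => (hderiv t (hD0 ht)).continuousWithinAt.mono hD0)
    (fun t ht => ((hderiv t (le_of_lt (hint ht))).hasDerivAt
      (Ici_mem_nhds (hint ht))).hasDerivWithinAt) fun t ht => ?_
  have hdt := hdiss t (hD0 (interior_subset ht)) (hvD t (interior_subset ht))
  nlinarith [hq0 t]

/-- The storage `W = v + s ∫ z` cannot cross the level `c`: where `q > 0` it strictly
decreases, and where `q = 0` we have `v < c`, so the dissipation inequality holds on a whole
neighbourhood and `W` is antitone there. -/
theorem le_of_dissipation (hv : ∀ t, 0 ≤ t → HasDerivAt v (v' t) t)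
    (hz : ContinuousOn z (Ici 0)) (hq : ContinuousOn q (Ici 0)) (hq0 : ∀ t, 0 ≤ q t)
    (hzint : ∀ T, 0 ≤ T → 0 ≤ ∫ t in (0 : ℝ)..T, z t) (hs : 0 ≤ s) (hε : 0 < ε)
    (hdiss : ∀ t, 0 ≤ t → v t ≤ c → v' t + s * z t ≤ -ε * q t)
    (hq_eq_zero : ∀ t, 0 ≤ t → q t = 0 → v t < c) (hv0 : v 0 ≤ c) {T : ℝ} (hT : 0 ≤ T) :
    v T ≤ c := by
  set W := augmentedLyapunov v z q s 0
  have hvW : ∀ t, 0 ≤ t → v t ≤ W t := fun t ht => le_augmentedLyapunov hs le_rfl hq0 hzint ht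
  have hderiv := fun t (ht : 0 ≤ t) =>
    hasDerivWithinAt_augmentedLyapunov (s := s) (k := 0) hv hz hq ht
  have hclosed : IsClosed ({t | W t ≤ c} ∩ Icc 0 T) := by
    rw [inter_comm]
    exact ContinuousOn.preimage_isClosed_of_isClosed
      (fun t ht => (hderiv t ht.1).continuousWithinAt.mono Icc_subset_Ici_self)
      isClosed_Icc isClosed_Iic
  refine (hvW T hT).trans <| hclosed.Icc_subset_of_forall_mem_nhdsWithin
    (by simpa [W, augmentedLyapunov_zero] using hv0) (fun t ⟨hWt, ht, _⟩ => ?_) ⟨hT, le_rfl⟩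
  change W t ≤ c at hWt
  rcases (hq0 t).eq_or_lt with hqt | hqt
  · obtain ⟨b, htb, hvb⟩ := mem_nhdsGE_iff_exists_Icc_subset.1 <| nhdsWithin_le_nhds <|
      (hv t ht).continuousAt.eventually_lt_const (hq_eq_zero t ht hqt.symm)
    have hanti := antitoneOn_augmentedLyapunov (k := 0) hv hz hq hq0 hdiss hε.le
      (convex_Icc t b) (fun u hu => ht.trans hu.1) fun u hu => le_of_lt (hvb hu)
    filter_upwards [Ioc_mem_nhdsGT htb] with u hu
    exact (hanti (left_mem_Icc.2 htb.le) (Ioc_subset_Icc_self hu) hu.1.le).trans hWt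
  · have hneg : v' t + s * z t + 0 * q t < 0 := by
      nlinarith [hdiss t ht ((hvW t ht).trans hWt)]
    filter_upwards [((hderiv t ht).mono (Ici_subset_Ici.2 ht)).eventually_lt_right_of_neg hneg]
      with u hu
    exact le_of_lt (hu.trans_le hWt)

theorem integral_le_of_dissipation (hv : ∀ t, 0 ≤ t → HasDerivAt v (v' t) t)
    (hv_nonneg : ∀ t, 0 ≤ v t)
    (hz : ContinuousOn z (Ici 0)) (hq : ContinuousOn q (Ici 0)) (hq0 : ∀ t, 0 ≤ q t)
    (hzint : ∀ T, 0 ≤ T → 0 ≤ ∫ t in (0 : ℝ)..T, z t) (hs : 0 ≤ s) (hε : 0 < ε)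
    (hdiss : ∀ t, 0 ≤ t → v t ≤ c → v' t + s * z t ≤ -ε * q t)
    (hq_eq_zero : ∀ t, 0 ≤ t → q t = 0 → v t < c) (hv0 : v 0 ≤ c) {T : ℝ} (hT : 0 ≤ T) :
    ε * ∫ t in (0 : ℝ)..T, q t ≤ c := by
  have hanti := antitoneOn_augmentedLyapunov (k := ε) hv hz hq hq0 hdiss le_rfl
    (convex_Ici 0) subset_rfl fun t ht =>
      le_of_dissipation hv hz hq hq0 hzint hs hε hdiss hq_eq_zero hv0 ht
  have hWT := hanti self_mem_Ici hT hT
  rw [augmentedLyapunov_zero] at hWT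
  have := mul_nonneg hs (hzint T hT)
  unfold augmentedLyapunov at hWT
  linarith [hv_nonneg T]

end Dissipation

theorem exists_lipschitzOnWith_of_hasDerivWithinAt_of_isCompact
    {E F : Type*} [NormedAddCommGroup E] [NormedSpace ℝ E] [TopologicalSpace F]
    {f : E → F → E} (hf : Continuous (Function.uncurry f)) {K : Set E} {L : Set F}
    (hK : IsCompact K) (hL : IsCompact L) {x : ℝ → E} {w : ℝ → F} {I : Set ℝ}
    (hI : Convex ℝ I) (hx : ∀ t ∈ I, HasDerivWithinAt x (f (x t) (w t)) I t)
    (hxK : ∀ t ∈ I, x t ∈ K) (hwL : ∀ t ∈ I, w t ∈ L) :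
    ∃ M, LipschitzOnWith M x I := by
  obtain ⟨M, hM⟩ := (hK.prod hL).bddAbove_image hf.nnnorm.continuousOn
  exact ⟨M, hI.lipschitzOnWith_of_nnnorm_hasDerivWithin_le hx fun t ht =>
    hM ⟨(x t, w t), ⟨hxK t ht, hwL t ht⟩, rfl⟩⟩

theorem stmt_0_general {N m p : ℕ}
    (f_e : EuclideanSpace ℝ (Fin N) → EuclideanSpace ℝ (Fin m) → EuclideanSpace ℝ (Fin N))
    (g_e : EuclideanSpace ℝ (Fin N) → EuclideanSpace ℝ (Fin p))
    (h_e : EuclideanSpace ℝ (Fin N) → EuclideanSpace ℝ (Fin m) → ℝ)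
    -- `f_e`, `g_e`, `h_e` are polynomial maps:
    (hf_poly : ∃ P : Fin N → MvPolynomial (Fin N ⊕ Fin m) ℝ,
      ∀ y u i, f_e y u i = MvPolynomial.eval (Sum.elim (fun j => y j) (fun j => u j)) (P i))
    (hg_poly : ∃ Q : Fin p → MvPolynomial (Fin N) ℝ,
      ∀ y i, g_e y i = MvPolynomial.eval (fun j => y j) (Q i))
    (hh_poly : ∃ R : MvPolynomial (Fin N ⊕ Fin m) ℝ,
      ∀ y u, h_e y u = MvPolynomial.eval (Sum.elim (fun j => y j) (fun j => u j)) R)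
    -- the trajectory: `x_e` is C¹ with `ẋₑ(t) = fₑ(xₑ(t), w(t))` for `t ≥ 0`, `w` continuous:
    (x_e : ℝ → EuclideanSpace ℝ (Fin N)) (w : ℝ → EuclideanSpace ℝ (Fin m))
    (hw_cont : ContinuousOn w (Set.Ici (0 : ℝ)))
    (hode : ∀ t : ℝ, 0 ≤ t → HasDerivAt x_e (f_e (x_e t) (w t)) t)
    -- (i) the integral polynomial constraint, with `z(t) = hₑ(xₑ(t), w(t))`:
    (hipc : ∀ T : ℝ, 0 ≤ T → 0 ≤ ∫ t in (0 : ℝ)..T, h_e (x_e t) (w t))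
    -- (ii) finite induced L∞ gain, with `v(t) = gₑ(xₑ(t))`:
    (γ : ℝ)
    (hgain : BddAbove (Set.range fun t : Set.Ici (0 : ℝ) => ‖g_e (x_e t)‖) →
      ∀ t : ℝ, 0 ≤ t → ‖w t‖ ≤ γ * ⨆ τ : Set.Ici (0 : ℝ), ‖g_e (x_e τ)‖)
    -- (iii) the Lyapunov-type dissipation inequality on the compact sublevel set `{V ≤ c}`:
    (V : EuclideanSpace ℝ (Fin N) → ℝ) (hV : ContDiff ℝ 1 V)
    (hV0 : V 0 = 0) (hVpos : ∀ y, y ≠ 0 → 0 < V y)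
    (c : ℝ) (hc : 0 < c) (hcompact : IsCompact {y | V y ≤ c})
    (s : ℝ) (hs : 0 ≤ s) (ε : ℝ) (hε : 0 < ε)
    (hdiss : ∀ (u : EuclideanSpace ℝ (Fin m)) (y : EuclideanSpace ℝ (Fin N)), V y ≤ c →
      ⟪gradient V y, f_e y u⟫ + s * h_e y u ≤ -ε * ‖y‖ ^ 2)
    (h0 : V (x_e 0) ≤ c) :
    Filter.Tendsto x_e Filter.atTop (nhds 0) := by
  have hx : ContinuousOn x_e (Ici 0) := fun t ht => (hode t ht).continuousAt.continuousWithinAt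
  have hVx : ∀ t, 0 ≤ t →
      HasDerivAt (fun τ => V (x_e τ)) ⟪gradient V (x_e t), f_e (x_e t) (w t)⟫ t := by
    intro t ht
    rw [inner_gradient_left]
    exact ((hV.differentiable one_ne_zero) _).hasFDerivAt.comp_hasDerivAt t (hode t ht)
  have hV_nonneg : ∀ y, 0 ≤ V y := fun y => by
    obtain rfl | hy := eq_or_ne y 0
    exacts [hV0.ge, (hVpos y hy).le]
  have hV_lt : ∀ t, 0 ≤ t → ‖x_e t‖ ^ 2 = 0 → V (x_e t) < c := fun t _ h => by
    rwa [norm_eq_zero.1 (pow_eq_zero_iff two_ne_zero |>.1 h), hV0]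
  have hz : ContinuousOn (fun t => h_e (x_e t) (w t)) (Ici 0) :=
    (continuous_uncurry_of_eq_eval hh_poly).comp_continuousOn (hx.prodMk hw_cont)
  have hq : ContinuousOn (fun t => ‖x_e t‖ ^ 2) (Ici 0) := hx.norm.pow 2
  have hinv : ∀ t, 0 ≤ t → V (x_e t) ≤ c := fun t ht =>
    le_of_dissipation hVx hz hq (fun t => by positivity) hipc hs hε
      (fun t _ => hdiss (w t) (x_e t)) hV_lt h0 ht
  have hL2 : ∀ T, 0 ≤ T → ∫ t in (0 : ℝ)..T, ‖x_e t‖ ^ 2 ≤ c / ε := fun T hT =>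
    (le_div_iff₀' hε).2 <| integral_le_of_dissipation hVx (fun t => hV_nonneg _) hz hq
      (fun t => by positivity) hipc hs hε (fun t _ => hdiss (w t) (x_e t)) hV_lt h0 hT
  have hw := hgain <| (hcompact.bddAbove_image
    (continuous_of_apply_eq_eval hg_poly).norm.continuousOn).mono
      (range_subset_iff.2 fun t => mem_image_of_mem (fun y => ‖g_e y‖) (hinv t t.2))
  obtain ⟨M, hM⟩ := exists_lipschitzOnWith_of_hasDerivWithinAt_of_isCompact (f := f_e)
    (continuous_uncurry_of_apply_eq_eval hf_poly) hcompact (isCompact_closedBall 0 _)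
    (convex_Ici 0) (fun t ht => (hode t ht).hasDerivWithinAt) hinv
    (fun t ht => mem_closedBall_zero_iff.2 (hw t ht))
  exact tendsto_zero_of_uniformContinuousOn_of_integral_sq_norm_le hM.uniformContinuousOn hL2

/-- Per-trajectory content of the paper's Theorem 1 (region of attraction): a trajectory
of the extended polynomial system `ẋₑ = fₑ(xₑ, w)`, with output `z = hₑ(xₑ, w)` satisfying
the integral polynomial constraint `∫₀ᵀ z ≥ 0`, whose input `w` obeys a finite induced
`L∞` gain bound relative to `v = gₑ(xₑ)`, and for which a Lyapunov-type dissipation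
inequality holds on a compact sublevel set `{V ≤ c}`, converges to the origin from any
initial condition with `V(xₑ(0)) ≤ c`. -/
theorem stmt_0 {N m p : ℕ}
    (f_e : EuclideanSpace ℝ (Fin N) → EuclideanSpace ℝ (Fin m) → EuclideanSpace ℝ (Fin N))
    (g_e : EuclideanSpace ℝ (Fin N) → EuclideanSpace ℝ (Fin p))
    (h_e : EuclideanSpace ℝ (Fin N) → EuclideanSpace ℝ (Fin m) → ℝ)
    -- `f_e`, `g_e`, `h_e` are polynomial maps:
    (hf_poly : ∃ P : Fin N → MvPolynomial (Fin N ⊕ Fin m) ℝ,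
      ∀ y u i, f_e y u i = MvPolynomial.eval (Sum.elim (fun j => y j) (fun j => u j)) (P i))
    (hg_poly : ∃ Q : Fin p → MvPolynomial (Fin N) ℝ,
      ∀ y i, g_e y i = MvPolynomial.eval (fun j => y j) (Q i))
    (hh_poly : ∃ R : MvPolynomial (Fin N ⊕ Fin m) ℝ,
      ∀ y u, h_e y u = MvPolynomial.eval (Sum.elim (fun j => y j) (fun j => u j)) R)
    (hf0 : f_e 0 0 = 0) (hg0 : g_e 0 = 0)
    -- the trajectory: `x_e` is C¹ with `ẋₑ(t) = fₑ(xₑ(t), w(t))` for `t ≥ 0`, `w` continuous: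
    (x_e : ℝ → EuclideanSpace ℝ (Fin N)) (w : ℝ → EuclideanSpace ℝ (Fin m))
    (hw_cont : ContinuousOn w (Set.Ici (0 : ℝ)))
    (hode : ∀ t : ℝ, 0 ≤ t → HasDerivAt x_e (f_e (x_e t) (w t)) t)
    (hx'_cont : ContinuousOn (fun t => f_e (x_e t) (w t)) (Set.Ici (0 : ℝ)))
    -- (i) the integral polynomial constraint, with `z(t) = hₑ(xₑ(t), w(t))`:
    (hipc : ∀ T : ℝ, 0 ≤ T → 0 ≤ ∫ t in (0 : ℝ)..T, h_e (x_e t) (w t))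
    -- (ii) finite induced L∞ gain, with `v(t) = gₑ(xₑ(t))`:
    (γ : ℝ) (hγ : 0 ≤ γ)
    (hgain : BddAbove (Set.range fun t : Set.Ici (0 : ℝ) => ‖g_e (x_e t)‖) →
      ∀ t : ℝ, 0 ≤ t → ‖w t‖ ≤ γ * ⨆ τ : Set.Ici (0 : ℝ), ‖g_e (x_e τ)‖)
    -- (iii) the Lyapunov-type dissipation inequality on the compact sublevel set `{V ≤ c}`:
    (V : EuclideanSpace ℝ (Fin N) → ℝ) (hV : ContDiff ℝ 1 V)
    (hV0 : V 0 = 0) (hVpos : ∀ y, y ≠ 0 → 0 < V y)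
    (c : ℝ) (hc : 0 < c) (hcompact : IsCompact {y | V y ≤ c})
    (s : ℝ) (hs : 0 ≤ s) (ε : ℝ) (hε : 0 < ε)
    (hdiss : ∀ (u : EuclideanSpace ℝ (Fin m)) (y : EuclideanSpace ℝ (Fin N)), V y ≤ c →
      ⟪gradient V y, f_e y u⟫ + s * h_e y u ≤ -ε * ‖y‖ ^ 2)
    (h0 : V (x_e 0) ≤ c) :
    Filter.Tendsto x_e Filter.atTop (nhds 0) :=
  stmt_0_general f_e g_e h_e hf_poly hg_poly hh_poly x_e w hw_cont hode hipc γ hgain V hV hV0 hVpos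
    c hc hcompact s hs ε hε hdiss h0
end

section
/- The function φ : ℝ → ℝ defined by φ(x) = x − (1/2)·tanh x is a bijection of ℝ onto ℝ, and the transformed function Δ̃ := ψ ∘ φ⁻¹, where ψ(x) = x − (3/2)·tanh x, satisfies the sector bound [−1,1]: |Δ̃(u)| ≤ |u| for every real u. -/
/-!
Both `tanh` and `x ↦ x - tanh x` are nondecreasing (their derivatives are `1 - tanh² x`
and `tanh² x`) and vanish at `0`, so `tanh x` lies between `0` and `x`.
Hence `φ = id - tanh / 2` is strictly increasing and stays within `1/2` of the identity, so it is
a bijection; and writing `t = tanh x`, the inequality `|x - 3t/2| ≤ |x - t/2|` is equivalent,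
after squaring, to `t (x - t) ≥ 0`.
-/

open Real Function Filter

theorem Real.hasDerivAt_tanh (x : ℝ) : HasDerivAt tanh (1 - tanh x ^ 2) x := by
  have h := (hasDerivAt_sinh x).div (hasDerivAt_cosh x) (cosh_pos x).ne'
  rw [show sinh / cosh = tanh from funext fun y => (tanh_eq_sinh_div_cosh y).symm] at h
  refine h.congr_deriv ?_
  rw [tanh_eq_sinh_div_cosh]
  field_simp

theorem Real.differentiable_tanh : Differentiable ℝ tanh :=
  fun x => (hasDerivAt_tanh x).differentiableAt

theorem Real.monotone_tanh : Monotone tanh :=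
  monotone_of_deriv_nonneg differentiable_tanh fun x => by
    rw [(hasDerivAt_tanh x).deriv]
    linarith [tanh_sq_lt_one x]

theorem Real.monotone_id_sub_tanh : Monotone fun x => x - tanh x := by
  have hd (x : ℝ) : HasDerivAt (fun x => x - tanh x) (tanh x ^ 2) x :=
    ((hasDerivAt_id' x).sub (hasDerivAt_tanh x)).congr_deriv (by ring)
  exact monotone_of_deriv_nonneg (fun x => (hd x).differentiableAt) fun x => by
    rw [(hd x).deriv]
    positivity

theorem Monotone.mul_nonneg_of_map_eq_zero {α β : Type*} [LinearOrder α] [Ring β]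
    [PartialOrder β] [IsOrderedRing β] {f g : α → β} (hf : Monotone f) (hg : Monotone g)
    {a : α} (hfa : f a = 0) (hga : g a = 0) (x : α) : 0 ≤ f x * g x := by
  rcases le_total a x with hax | hxa
  · exact mul_nonneg (hfa ▸ hf hax) (hga ▸ hg hax)
  · exact mul_nonneg_of_nonpos_of_nonpos (hfa ▸ hf hxa) (hga ▸ hg hxa)

theorem Real.tanh_mul_sub_tanh_nonneg (x : ℝ) : 0 ≤ tanh x * (x - tanh x) :=
  monotone_tanh.mul_nonneg_of_map_eq_zero monotone_id_sub_tanh tanh_zero (by simp) x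

theorem Continuous.surjective_of_abs_sub_le {f : ℝ → ℝ} (hf : Continuous f) {C : ℝ}
    (hC : ∀ x, |f x - x| ≤ C) : Surjective f := by
  refine hf.surjective ?_ ?_
  · refine tendsto_atTop_mono (fun x => ?_) (tendsto_atTop_add_const_right _ (-C) tendsto_id)
    linarith [(abs_le.1 (hC x)).1, show id x = x from rfl]
  · refine tendsto_atBot_mono (fun x => ?_) (tendsto_atBot_add_const_right _ C tendsto_id)
    linarith [(abs_le.1 (hC x)).2, show id x = x from rfl]

/-- Loop transformation: a nonlinearity `t = Δ x` in the sector `[0, 1]` becomes, in the new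
input `u = x - a t`, an output `x - b t` in the sector `[-1, 1]`. -/
theorem abs_sub_mul_le_abs_sub_mul {x t a b : ℝ} (hab : a ≤ b) (hab₂ : a + b ≤ 2)
    (ht : 0 ≤ t * (x - t)) : |x - b * t| ≤ |x - a * t| := by
  refine sq_le_sq.1 ?_
  have key : (x - a * t) ^ 2 - (x - b * t) ^ 2
      = (b - a) * (2 * (t * (x - t)) + (2 - a - b) * t ^ 2) := by ring
  have : 0 ≤ (b - a) * (2 * (t * (x - t)) + (2 - a - b) * t ^ 2) :=
    mul_nonneg (by linarith) (add_nonneg (by linarith) (mul_nonneg (by linarith) (sq_nonneg t)))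
  linarith

/-- Paper's Example 1: `φ(x) = x - (1/2) tanh x` is a bijection of `ℝ`, and the
transformed function `Δ̃ = ψ ∘ φ⁻¹` with `ψ(x) = x - (3/2) tanh x` satisfies the
sector bound `[-1, 1]`: `|Δ̃(u)| ≤ |u|` for every real `u`. -/
theorem stmt_6 :
    Function.Bijective (fun x : ℝ => x - (1 / 2) * Real.tanh x) ∧
      ∀ u : ℝ,
        |(fun x : ℝ => x - (3 / 2) * Real.tanh x)
            (Function.invFun (fun x : ℝ => x - (1 / 2) * Real.tanh x) u)| ≤ |u| := by
  set φ : ℝ → ℝ := fun x => x - (1 / 2) * tanh x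
  have hφ_mono : StrictMono φ := fun x y hxy => by
    have := monotone_id_sub_tanh hxy.le
    simp only [φ] at this ⊢
    linarith
  have hφ_surj : Surjective φ := by
    have hφ_cont : Continuous φ :=
      continuous_id.sub (continuous_const.mul differentiable_tanh.continuous)
    refine hφ_cont.surjective_of_abs_sub_le (C := 1 / 2) fun x => abs_le.2 ⟨?_, ?_⟩ <;>
      simp only [φ] <;> linarith [tanh_lt_one x, neg_one_lt_tanh x]
  refine ⟨⟨hφ_mono.injective, hφ_surj⟩, fun u => ?_⟩
  obtain ⟨x, rfl⟩ := hφ_surj u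
  rw [leftInverse_invFun hφ_mono.injective x]
  exact abs_sub_mul_le_abs_sub_mul (a := 1 / 2) (b := 3 / 2) (by norm_num) (by norm_num)
    (tanh_mul_sub_tanh_nonneg x)
end

section
/- For every real number x with |x| ≤ 1.5, setting y = tanh x, one has (x − y³ − y)·((1/6)·y³ + y − x) ≥ 0; that is, the function tanh satisfies the static polynomial constraint p(x,y) = (x − y³ − y)·((1/6)y³ + y − x) on the interval [−1.5, 1.5]. -/
/-!
Write `t = tanh x`, so that `tanh' = 1 - t²`. The lower bound `t + t³/6 ≤ x` holds for all
`x ≥ 0` because `x - t - t³/6` has derivative `t²(1 + t²)/2 ≥ 0` and vanishes at `0`. The upper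
bound `x ≤ t + t³` is only local: `F x = t + t³ - x` has derivative `t²(2 - 3t²)`, so `F` rises
while `t² ≤ 2/3` and falls afterwards. Hence on `[0, 1.5]` it is bounded below by
`min (F 0) (F 1.5) = 0`, the value `F 1.5 > 0` coming from `tanh 1.5 ≥ 0.9`, i.e. `e³ ≥ 19`.
Both factors of the constraint are therefore nonpositive for `0 ≤ x ≤ 1.5`, and the constraint
is even in `x`.
-/

open Set

namespace Real

theorem hasDerivAt_tanh_s7 (x : ℝ) : HasDerivAt tanh (1 - tanh x ^ 2) x := by
  rw [show tanh = fun y => sinh y / cosh y from funext tanh_eq_sinh_div_cosh]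
  refine ((hasDerivAt_sinh x).div (hasDerivAt_cosh x) (cosh_pos x).ne').congr_deriv ?_
  beta_reduce
  field_simp

theorem tanh_strictMono : StrictMono tanh :=
  strictMono_of_hasDerivAt_pos hasDerivAt_tanh_s7 fun x => by linarith [tanh_sq_lt_one x]

theorem tanh_nonneg {x : ℝ} (hx : 0 ≤ x) : 0 ≤ tanh x := by
  simpa only [tanh_zero] using tanh_strictMono.monotone hx

theorem nine_tenths_le_tanh_three_halves : (0.9 : ℝ) ≤ tanh 1.5 := by
  have hexp_three : (19 : ℝ) ≤ exp 1.5 * exp 1.5 := by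
    rw [← exp_add, show (1.5 : ℝ) + 1.5 = 1 * 3 by norm_num, exp_mul, rpow_ofNat]
    have h := pow_le_pow_left₀ (by norm_num) exp_one_gt_d9.le 3
    linarith
  have hinv : exp 1.5 * exp (-1.5) = 1 := by rw [← exp_add]; norm_num
  rw [tanh_eq, le_div_iff₀ (by positivity)]
  nlinarith [exp_pos 1.5, exp_pos (-1.5)]

theorem tanh_add_tanh_pow_three_div_six_le {x : ℝ} (hx : 0 ≤ x) :
    tanh x + tanh x ^ 3 / 6 ≤ x := by
  have hderiv (y : ℝ) : HasDerivAt (fun z => z - tanh z - tanh z ^ 3 / 6)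
      (tanh y ^ 2 * (1 + tanh y ^ 2) / 2) y := by
    refine (((hasDerivAt_id y).sub (hasDerivAt_tanh_s7 y)).sub
      (((hasDerivAt_tanh_s7 y).pow 3).div_const 6)).congr_deriv ?_
    ring
  have hmono := monotone_of_hasDerivAt_nonneg hderiv fun y => by positivity
  have := hmono hx
  simp only [tanh_zero] at this
  linarith

theorem le_tanh_add_tanh_pow_three {x : ℝ} (hx₀ : 0 ≤ x) (hx₁ : x ≤ 1.5) :
    x ≤ tanh x + tanh x ^ 3 := by
  set F : ℝ → ℝ := fun z => tanh z + tanh z ^ 3 - z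
  have hderiv (y : ℝ) : HasDerivAt F (tanh y ^ 2 * (2 - 3 * tanh y ^ 2)) y := by
    refine (((hasDerivAt_tanh_s7 y).add ((hasDerivAt_tanh_s7 y).pow 3)).sub
      (hasDerivAt_id y)).congr_deriv ?_
    ring
  have hcont : ContinuousOn F univ := fun y _ => (hderiv y).continuousAt.continuousWithinAt
  suffices 0 ≤ F x by simp only [F] at this; linarith
  rcases le_or_gt (tanh x ^ 2) (2 / 3) with hsmall | hlarge
  · have hmono : MonotoneOn F (Icc 0 x) := by
      refine monotoneOn_of_hasDerivWithinAt_nonneg (convex_Icc 0 x) (hcont.mono (subset_univ _))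
        (fun y _ => (hderiv y).hasDerivWithinAt) fun y hy => ?_
      rw [interior_Icc] at hy
      have hty : tanh y ^ 2 ≤ tanh x ^ 2 :=
        pow_le_pow_left₀ (tanh_nonneg hy.1.le) (tanh_strictMono.monotone hy.2.le) 2
      nlinarith [sq_nonneg (tanh y)]
    simpa [F] using hmono (left_mem_Icc.2 hx₀) (right_mem_Icc.2 hx₀) hx₀
  · have hanti : AntitoneOn F (Icc x 1.5) := by
      refine antitoneOn_of_hasDerivWithinAt_nonpos (convex_Icc x 1.5) (hcont.mono (subset_univ _))
        (fun y _ => (hderiv y).hasDerivWithinAt) fun y hy => ?_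
      rw [interior_Icc] at hy
      have hty : tanh x ^ 2 ≤ tanh y ^ 2 :=
        pow_le_pow_left₀ (tanh_nonneg hx₀) (tanh_strictMono.monotone hy.1.le) 2
      nlinarith [sq_nonneg (tanh y)]
    have hF : 0 ≤ F 1.5 := by
      have h := nine_tenths_le_tanh_three_halves
      have h3 : (0.9 : ℝ) ^ 3 ≤ tanh 1.5 ^ 3 := pow_le_pow_left₀ (by norm_num) h 3
      simp only [F]
      linarith
    exact hF.trans (hanti (left_mem_Icc.2 hx₁) (right_mem_Icc.2 hx₁) hx₁)

end Real

/-- Cubic-based static polynomial constraint on `tanh` from Section IV of the paper: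
`p(x, y) = (x - y³ - y)((1/6)y³ + y - x) ≥ 0` with `y = tanh x`, for `|x| ≤ 1.5`. -/
theorem stmt_7 (x : ℝ) (hx : |x| ≤ 1.5) :
    (x - Real.tanh x ^ 3 - Real.tanh x) * ((1 / 6) * Real.tanh x ^ 3 + Real.tanh x - x)
      ≥ 0 := by
  have of_nonneg {y : ℝ} (hy₀ : 0 ≤ y) (hy₁ : y ≤ 1.5) :
      0 ≤ (y - Real.tanh y ^ 3 - Real.tanh y) * ((1 / 6) * Real.tanh y ^ 3 + Real.tanh y - y) :=
    mul_nonneg_of_nonpos_of_nonpos (by linarith [Real.le_tanh_add_tanh_pow_three hy₀ hy₁])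
      (by linarith [Real.tanh_add_tanh_pow_three_div_six_le hy₀])
  obtain ⟨hx_lower, hx_upper⟩ := abs_le.1 hx
  rcases le_total 0 x with hx₀ | hx₀
  · exact of_nonneg hx₀ hx_upper
  · have h := of_nonneg (neg_nonneg.2 hx₀) (by linarith)
    rw [Real.tanh_neg] at h
    linarith
end

section
/- For every real number x with −1 ≤ x ≤ 0.9, setting y = e^x − x − 1, one has (y − 0.3·x²)·(0.7·x² − y) ≥ 0; that is, 0.3·x² ≤ e^x − x − 1 ≤ 0.7·x² for all x ∈ [−1, 0.9]. -/
/-- Quadratic-based static polynomial constraint on `eˣ - x - 1` from Section IV of the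
paper: `p(x, y) = (y - 0.3x²)(0.7x² - y) ≥ 0` with `y = eˣ - x - 1`, for `x ∈ [-1, 0.9]`;
equivalently `0.3x² ≤ eˣ - x - 1 ≤ 0.7x²` there. -/
theorem stmt_8 (x : ℝ) (hx₁ : -1 ≤ x) (hx₂ : x ≤ 0.9) :
    (Real.exp x - x - 1 - 0.3 * x ^ 2) * (0.7 * x ^ 2 - (Real.exp x - x - 1)) ≥ 0 ∧
      0.3 * x ^ 2 ≤ Real.exp x - x - 1 ∧ Real.exp x - x - 1 ≤ 0.7 * x ^ 2 := by
  have hx : |x| ≤ 1 := abs_le.2 ⟨hx₁, by linarith⟩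
  have hb := Real.exp_bound hx (n := 5) (by norm_num)
  simp [Finset.sum_range_succ, Nat.factorial] at hb
  rw [abs_le] at hb
  have h5 : |x| ^ 5 ≤ x ^ 4 := by
    have h4 : |x| ^ 4 = x ^ 4 := by rw [← abs_pow, abs_of_nonneg (by positivity)]
    calc |x| ^ 5 = |x| * |x| ^ 4 := by ring
    _ ≤ 1 * x ^ 4 := by rw [h4]; exact mul_le_mul_of_nonneg_right hx (by positivity)
    _ = x ^ 4 := one_mul _
  obtain ⟨hb1, hb2⟩ := hb
  have key : (0:ℝ) ≤ (0.9 - x) * (x + 1) * x ^ 2 :=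
    mul_nonneg (mul_nonneg (by linarith) (by linarith)) (sq_nonneg x)
  have hlow : 0.3 * x ^ 2 ≤ Real.exp x - x - 1 := by
    nlinarith [sq_nonneg x, sq_nonneg (x*x), key, sq_nonneg (x*(x+1))]
  have hup : Real.exp x - x - 1 ≤ 0.7 * x ^ 2 := by
    nlinarith [sq_nonneg x, sq_nonneg (x*x), key, sq_nonneg (x*(x-0.9))]
  exact ⟨mul_nonneg (by linarith) (by linarith), hlow, hup⟩
end

section
/- Let n be a natural number, c > 0, ε > 0 and s ≥ 0 real numbers. Let V : ℝⁿ → ℝ be continuous with V(0) = 0 and V(y) > 0 for all y ≠ 0. Let x : [0,∞) → ℝⁿ be continuous and let z : [0,∞) → ℝ be continuous with ∫₀^T z(τ) dτ ≥ 0 for every T ≥ 0. Suppose the composition t ↦ V(x(t)) is differentiable on [0,∞) with derivative d(t) satisfying: for every t ≥ 0 with V(x(t)) ≤ c, d(t) ≤ −ε·‖x(t)‖² − s·z(t), and d is locally integrable. If V(x(0)) ≤ c, then V(x(t)) ≤ c for all t ≥ 0. -/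
open Set MeasureTheory intervalIntegral Filter Topology

/-- Forward-invariance step in the proof of the paper's Theorem 1: if the dissipation
inequality `d/dt V(x(t)) ≤ -ε ‖x(t)‖² - s z(t)` holds whenever `V(x(t)) ≤ c`, and the
integral constraint `∫₀ᵀ z ≥ 0` holds, then the sublevel set `{V ≤ c}` is forward
invariant along the trajectory. -/
theorem stmt_11 {n : ℕ} (c ε s : ℝ) (hc : 0 < c) (hε : 0 < ε) (hs : 0 ≤ s)
    (V : EuclideanSpace ℝ (Fin n) → ℝ) (hVcont : Continuous V) (hV0 : V 0 = 0)
    (hVpos : ∀ y, y ≠ 0 → 0 < V y)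
    (x : ℝ → EuclideanSpace ℝ (Fin n)) (hx : ContinuousOn x (Set.Ici 0))
    (z : ℝ → ℝ) (hzcont : ContinuousOn z (Set.Ici 0))
    (hzint : ∀ T : ℝ, 0 ≤ T → 0 ≤ ∫ τ in (0 : ℝ)..T, z τ)
    (d : ℝ → ℝ)
    (hd : ∀ t ∈ Set.Ici (0 : ℝ),
      HasDerivWithinAt (fun τ => V (x τ)) (d t) (Set.Ici 0) t)
    (hdint : MeasureTheory.LocallyIntegrableOn d (Set.Ici (0 : ℝ)))
    (hdiss : ∀ t ∈ Set.Ici (0 : ℝ), V (x t) ≤ c → d t ≤ -ε * ‖x t‖ ^ 2 - s * z t)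
    (h0 : V (x 0) ≤ c) :
    ∀ t : ℝ, 0 ≤ t → V (x t) ≤ c := by
  have hWcont : ContinuousOn (fun τ => V (x τ)) (Set.Ici 0) :=
    fun t ht => (hd t ht).continuousWithinAt
  -- z 0 ≥ 0
  have hz0 : 0 ≤ z 0 := by
    by_contra h
    push_neg at h
    have hcz : ContinuousWithinAt z (Set.Ici 0) 0 := hzcont 0 Set.self_mem_Ici
    rw [Metric.continuousWithinAt_iff] at hcz
    obtain ⟨δ, hδ, hδ'⟩ := hcz (-z 0 / 2) (by linarith)
    have hsub : ∀ u ∈ Set.Icc (0:ℝ) (δ/2), z u ≤ z 0 / 2 := by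
      intro u hu
      have := hδ' hu.1 (by
        rw [Real.dist_eq]
        rw [abs_of_nonneg (by linarith [hu.1])]
        linarith [hu.2])
      rw [Real.dist_eq] at this
      have := abs_lt.mp this
      linarith [this.2]
    have hzi : IntervalIntegrable z volume 0 (δ/2) :=
      ((hzcont.mono (by intro u hu; rw [Set.uIcc_of_le (by linarith : (0:ℝ) ≤ δ/2)] at hu; exact hu.1)).intervalIntegrable)
    have hci : IntervalIntegrable (fun _ : ℝ => z 0 / 2) volume 0 (δ/2) :=
      intervalIntegrable_const
    have hmono := intervalIntegral.integral_mono_on (by linarith : (0:ℝ) ≤ δ/2) hzi hci hsub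
    rw [intervalIntegral.integral_const, smul_eq_mul] at hmono
    have := hzint (δ/2) (by linarith)
    nlinarith
  intro t ht
  by_contra hbad
  push_neg at hbad
  set B := {u : ℝ | 0 ≤ u ∧ c < V (x u)} with hBdef
  have hBne : B.Nonempty := ⟨t, ht, hbad⟩
  have hBbd : BddBelow B := ⟨0, fun u hu => hu.1⟩
  set T := sInf B with hTdef
  have hT0 : 0 ≤ T := le_csInf hBne fun u hu => hu.1
  have hle : ∀ u, 0 ≤ u → u < T → V (x u) ≤ c := by
    intro u hu hult
    by_contra h
    push_neg at h
    exact absurd (csInf_le hBbd ⟨hu, h⟩) (not_le.mpr hult)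
  have hTcl : T ∈ closure B := csInf_mem_closure hBne hBbd
  have hWT_ge : c ≤ V (x T) := by
    have hne : (𝓝[B] T).NeBot := mem_closure_iff_nhdsWithin_neBot.mp hTcl
    have htd : Filter.Tendsto (fun τ => V (x τ)) (𝓝[B] T) (𝓝 (V (x T))) :=
      ((hWcont T hT0).mono (fun u hu => hu.1)).tendsto
    exact ge_of_tendsto htd (Filter.eventually_of_mem self_mem_nhdsWithin
      fun u hu => le_of_lt hu.2)
  have hWT_le : V (x T) ≤ c := by
    rcases eq_or_lt_of_le hT0 with h | h
    · rw [← h]; exact h0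
    · have hclt : T ∈ closure (Set.Ico 0 T) := by
        rw [closure_Ico h.ne]
        exact ⟨hT0, le_rfl⟩
      have hne : (𝓝[Set.Ico 0 T] T).NeBot := mem_closure_iff_nhdsWithin_neBot.mp hclt
      have htd : Filter.Tendsto (fun τ => V (x τ)) (𝓝[Set.Ico 0 T] T) (𝓝 (V (x T))) :=
        ((hWcont T hT0).mono (fun u hu => hu.1)).tendsto
      exact le_of_tendsto htd (Filter.eventually_of_mem self_mem_nhdsWithin
        fun u hu => hle u hu.1 hu.2)
  have hWT : V (x T) = c := le_antisymm hWT_le hWT_ge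
  have hxT : x T ≠ 0 := by
    intro h
    rw [h, hV0] at hWT
    exact hc.ne' hWT.symm
  have hIcc : ∀ u ∈ Set.Icc 0 T, V (x u) ≤ c := by
    intro u hu
    rcases lt_or_eq_of_le hu.2 with h | h
    · exact hle u hu.1 h
    · rw [h]; exact hWT_le
  rcases eq_or_lt_of_le hT0 with hT | hT
  -- Case T = 0 : use negative right derivative at 0
  · have hW0 : V (x 0) = c := by rw [hT]; exact hWT
    have hd0 : d 0 ≤ -ε * ‖x 0‖ ^ 2 - s * z 0 := hdiss 0 Set.self_mem_Ici h0
    have hx0 : x 0 ≠ 0 := by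
      intro h
      apply hc.ne'
      rw [← hW0, h, hV0]
    have hd0neg : d 0 < 0 := by
      have : (0:ℝ) < ‖x 0‖ ^ 2 := pow_pos (norm_pos_iff.mpr hx0) 2
      nlinarith
    have hslope := (hasDerivWithinAt_iff_tendsto_slope.mp (hd 0 Set.self_mem_Ici))
    rw [Set.Ici_sdiff_left] at hslope
    have hev : ∀ᶠ u in 𝓝[>] (0:ℝ), slope (fun τ => V (x τ)) 0 u < 0 :=
      hslope (Iio_mem_nhds hd0neg)
    rw [(nhdsGT_basis (0:ℝ)).eventually_iff] at hev
    obtain ⟨b, hb, hball⟩ := hev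
    have : sInf B < b := by rw [← hTdef, ← hT]; exact hb
    obtain ⟨u, huB, hub⟩ := exists_lt_of_csInf_lt hBne this
    have hu0 : 0 < u := by
      rcases lt_or_eq_of_le huB.1 with h | h
      · exact h
      · exfalso; rw [← h] at huB; exact absurd hW0 (ne_of_gt huB.2)
    have := hball ⟨hu0, hub⟩
    rw [slope_def_field] at this
    have : (V (x u) - V (x 0)) / (u - 0) < 0 := by
      simpa [div_eq_inv_mul] using this
    rw [sub_zero] at this
    have hnum : V (x u) - V (x 0) < 0 := by
      by_contra hcon
      push_neg at hcon
      exact absurd this (not_lt.mpr (div_nonneg hcon (le_of_lt hu0)))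
    rw [hW0] at hnum
    linarith [huB.2]
  -- Case T > 0 : integral argument
  · have hIccsub : Set.Icc (0:ℝ) T ⊆ Set.Ici 0 := fun u hu => hu.1
    have hdI : IntervalIntegrable d volume 0 T := by
      have h1 := hdint.integrableOn_compact_subset hIccsub isCompact_Icc
      have h2 : MeasureTheory.IntegrableOn d (Set.uIcc 0 T) := by
        rwa [Set.uIcc_of_le hT.le]
      exact h2.intervalIntegrable
    have hftc : ∫ u in (0:ℝ)..T, d u = V (x T) - V (x 0) := by
      apply intervalIntegral.integral_eq_sub_of_hasDeriv_right_of_le (le_of_lt hT)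
        (hWcont.mono hIccsub)
      · intro u hu
        exact (hd u (le_of_lt hu.1)).mono fun v hv => le_of_lt (lt_trans hu.1 hv)
      · exact hdI
    have hrhsI : IntervalIntegrable (fun u => -ε * ‖x u‖ ^ 2 - s * z u) volume 0 T := by
      apply ContinuousOn.intervalIntegrable
      rw [Set.uIcc_of_le (le_of_lt hT)]
      exact ((continuousOn_const.mul (((hx.mono hIccsub).norm).pow 2)).sub
        (continuousOn_const.mul (hzcont.mono hIccsub)))
    have hmono : ∫ u in (0:ℝ)..T, d u ≤ ∫ u in (0:ℝ)..T, (-ε * ‖x u‖ ^ 2 - s * z u) :=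
      intervalIntegral.integral_mono_on (le_of_lt hT) hdI hrhsI
        (fun u hu => hdiss u hu.1 (hIcc u hu))
    have hxI : IntervalIntegrable (fun u => ‖x u‖ ^ 2) volume 0 T := by
      apply ContinuousOn.intervalIntegrable
      rw [Set.uIcc_of_le (le_of_lt hT)]
      exact ((hx.mono hIccsub).norm).pow 2
    have hzI : IntervalIntegrable z volume 0 T := by
      apply ContinuousOn.intervalIntegrable
      rw [Set.uIcc_of_le (le_of_lt hT)]
      exact hzcont.mono hIccsub
    have hsplit : ∫ u in (0:ℝ)..T, (-ε * ‖x u‖ ^ 2 - s * z u)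
        = -ε * (∫ u in (0:ℝ)..T, ‖x u‖ ^ 2) - s * ∫ u in (0:ℝ)..T, z u := by
      rw [intervalIntegral.integral_sub (hxI.const_mul _) (hzI.const_mul _),
        intervalIntegral.integral_const_mul, intervalIntegral.integral_const_mul]
    have hzpos := hzint T (le_of_lt hT)
    have hInonneg : 0 ≤ ∫ u in (0:ℝ)..T, ‖x u‖ ^ 2 :=
      intervalIntegral.integral_nonneg (le_of_lt hT) (fun u _ => by positivity)
    have hIzero : ∫ u in (0:ℝ)..T, ‖x u‖ ^ 2 = 0 := by
      rw [hftc, hsplit] at hmono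
      have hεI : ε * (∫ u in (0:ℝ)..T, ‖x u‖ ^ 2) ≤ ε * 0 := by
        nlinarith [mul_nonneg hs hzpos]
      exact le_antisymm (le_of_mul_le_mul_left hεI hε) hInonneg
    -- but the integral must be positive since ‖x T‖² > 0
    have hnormT : 0 < ‖x T‖ ^ 2 := pow_pos (norm_pos_iff.mpr hxT) 2
    have hcx : ContinuousWithinAt (fun u => ‖x u‖ ^ 2) (Set.Ici 0) T :=
      (((hx T hT0).norm).pow 2)
    rw [Metric.continuousWithinAt_iff] at hcx
    obtain ⟨δ, hδ, hδ'⟩ := hcx (‖x T‖ ^ 2 / 2) (by positivity)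
    set t0 := max (T - δ/2) (T/2) with ht0def
    have ht0pos : 0 < t0 := lt_max_of_lt_right (by linarith)
    have ht0lt : t0 < T := max_lt (by linarith) (by linarith)
    have hlower : ∀ u ∈ Set.Icc t0 T, ‖x T‖ ^ 2 / 2 ≤ ‖x u‖ ^ 2 := by
      intro u hu
      have hu0 : (0:ℝ) ≤ u := le_of_lt (lt_of_lt_of_le ht0pos hu.1)
      have hdist : dist u T < δ := by
        rw [Real.dist_eq, abs_of_nonpos (by linarith [hu.2])]
        have : T - δ/2 ≤ t0 := le_max_left _ _
        linarith [hu.1]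
      have := hδ' hu0 hdist
      rw [Real.dist_eq] at this
      have := abs_lt.mp this
      linarith [this.1]
    have hx1 : IntervalIntegrable (fun u => ‖x u‖ ^ 2) volume 0 t0 := by
      apply ContinuousOn.intervalIntegrable
      rw [Set.uIcc_of_le (le_of_lt ht0pos)]
      exact ((hx.mono (fun u (hu : u ∈ Set.Icc (0:ℝ) t0) => hu.1)).norm).pow 2
    have hx2 : IntervalIntegrable (fun u => ‖x u‖ ^ 2) volume t0 T := by
      apply ContinuousOn.intervalIntegrable
      rw [Set.uIcc_of_le (le_of_lt ht0lt)]
      exact ((hx.mono (fun u (hu : u ∈ Set.Icc t0 T) =>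
        le_trans (le_of_lt ht0pos) hu.1)).norm).pow 2
    have hadd : (∫ u in (0:ℝ)..t0, ‖x u‖ ^ 2) + ∫ u in t0..T, ‖x u‖ ^ 2
        = ∫ u in (0:ℝ)..T, ‖x u‖ ^ 2 :=
      intervalIntegral.integral_add_adjacent_intervals hx1 hx2
    have h1 : 0 ≤ ∫ u in (0:ℝ)..t0, ‖x u‖ ^ 2 :=
      intervalIntegral.integral_nonneg (le_of_lt ht0pos) (fun u _ => by positivity)
    have h2 : (T - t0) * (‖x T‖ ^ 2 / 2) ≤ ∫ u in t0..T, ‖x u‖ ^ 2 := by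
      have := intervalIntegral.integral_mono_on (le_of_lt ht0lt)
        (_root_.intervalIntegrable_const (c := ‖x T‖ ^ 2 / 2)) hx2 hlower
      rwa [intervalIntegral.integral_const, smul_eq_mul] at this
    nlinarith [hIzero, hadd, h1, h2,
      mul_pos (sub_pos.mpr ht0lt) (half_pos hnormT)]
end
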